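/- arXiv:2504.15483 — 3 statements merged into one kernel-verified Lean document; each statement's English description precedes it below -/
import Mathlib

section
/- Let G be a finite index set and let Z = {0,1}^G. Let c, f, g : Z → ℝ with g(z) ≤ f(z) for all z ∈ Z, and set δ(z) = f(z) − g(z). Then the minimum, over all pairs (ζ, μ) with ζ ∈ Z and μ : Z → {0,1} satisfying the integer cut μ(z) ≥ 1 − |{ i ∈ G : ζ_i ≠ z_i }| for every z ∈ Z, of the objective c(ζ) + g(ζ) + Σ_{z∈Z} δ(z)·μ(z), equals the minimum over ζ ∈ Z of c(ζ) + f(ζ); moreover any (ζ, μ) attaining the former minimum has ζ attaining the latter. -/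
open scoped Classical

/-- Over `Z = {0,1}^G` (modeled as `G → Bool`), with `g ≤ f` and
`δ = f − g`, the minimum of `c ζ + g ζ + Σ_z δ z * μ z` over pairs `(ζ, μ)` with
binary `μ` satisfying all integer cuts equals the minimum of `c ζ + f ζ`, and any
minimizer `(ζ, μ)` of the former has `ζ` minimizing the latter. -/
theorem master_with_all_integer_cuts_recovers_true_cost
    {G : Type*} [Fintype G] [DecidableEq G]
    (c f g : (G → Bool) → ℝ) (hgf : ∀ z, g z ≤ f z)
    (δ : (G → Bool) → ℝ) (hδ : ∀ z, δ z = f z - g z) :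
    ∃ m : ℝ,
      IsLeast { v : ℝ | ∃ (ζ : G → Bool) (μ : (G → Bool) → ℝ),
          (∀ z, μ z = 0 ∨ μ z = 1) ∧
          (∀ z, μ z ≥ 1 - ((Finset.univ.filter fun i => ζ i ≠ z i).card : ℝ)) ∧
          v = c ζ + g ζ + ∑ z : G → Bool, δ z * μ z } m ∧
      IsLeast { v : ℝ | ∃ ζ : G → Bool, v = c ζ + f ζ } m ∧
      (∀ (ζ : G → Bool) (μ : (G → Bool) → ℝ),
        (∀ z, μ z = 0 ∨ μ z = 1) →
        (∀ z, μ z ≥ 1 - ((Finset.univ.filter fun i => ζ i ≠ z i).card : ℝ)) →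
        c ζ + g ζ + ∑ z : G → Bool, δ z * μ z = m →
        ∀ ζ' : G → Bool, c ζ + f ζ ≤ c ζ' + f ζ') := by
  obtain ⟨ζ₀, -, hζ₀⟩ := Finset.exists_min_image (Finset.univ : Finset (G → Bool))
    (fun ζ => c ζ + f ζ) ⟨fun _ => true, Finset.mem_univ _⟩
  have hζ₀' : ∀ ζ : G → Bool, c ζ₀ + f ζ₀ ≤ c ζ + f ζ := fun ζ => hζ₀ ζ (Finset.mem_univ ζ)
  -- key lower bound
  have key : ∀ (ζ : G → Bool) (μ : (G → Bool) → ℝ),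
      (∀ z, μ z = 0 ∨ μ z = 1) →
      (∀ z, μ z ≥ 1 - ((Finset.univ.filter fun i => ζ i ≠ z i).card : ℝ)) →
      c ζ + f ζ ≤ c ζ + g ζ + ∑ z : G → Bool, δ z * μ z := by
    intro ζ μ hbin hcut
    have hμζ : μ ζ = 1 := by
      have h := hcut ζ
      have he : (Finset.univ.filter fun i => ζ i ≠ ζ i) = ∅ := by simp
      rw [he] at h
      simp at h
      rcases hbin ζ with h0 | h1
      · exfalso; rw [h0] at h; linarith
      · exact h1
    have hsum : δ ζ ≤ ∑ z : G → Bool, δ z * μ z := by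
      calc δ ζ = δ ζ * μ ζ := by rw [hμζ]; ring
        _ ≤ ∑ z : G → Bool, δ z * μ z := by
            apply Finset.single_le_sum (f := fun z => δ z * μ z) _ (Finset.mem_univ ζ)
            intro z _
            have h1 := hgf z
            have hδz : 0 ≤ δ z := by rw [hδ]; linarith
            exact mul_nonneg hδz (by rcases hbin z with h0 | h1' <;> [rw [h0]; rw [h1']] <;> norm_num)
    linarith [hδ ζ]
  -- witness μ construction
  have wit : ∀ ζ : G → Bool, ∃ μ : (G → Bool) → ℝ,
      (∀ z, μ z = 0 ∨ μ z = 1) ∧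
      (∀ z, μ z ≥ 1 - ((Finset.univ.filter fun i => ζ i ≠ z i).card : ℝ)) ∧
      c ζ + g ζ + ∑ z : G → Bool, δ z * μ z = c ζ + f ζ := by
    intro ζ
    refine ⟨fun z => if z = ζ then 1 else 0, fun z => by by_cases h : z = ζ <;> simp [h], ?_, ?_⟩
    · intro z
      by_cases h : z = ζ
      · subst h; simp
      · have hne : ∃ i, ζ i ≠ z i := by
          by_contra hc
          push_neg at hc
          exact h (funext fun i => (hc i).symm)
        obtain ⟨i, hi⟩ := hne
        have hcard : 1 ≤ (Finset.univ.filter fun i => ζ i ≠ z i).card := by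
          apply Finset.card_pos.mpr
          exact ⟨i, by simp [hi]⟩
        have : (1 : ℝ) ≤ ((Finset.univ.filter fun i => ζ i ≠ z i).card : ℝ) := by
          exact_mod_cast hcard
        simp only [if_neg h]
        linarith
    · have : (∑ z : G → Bool, δ z * if z = ζ then 1 else 0) = δ ζ := by
        rw [Finset.sum_eq_single ζ]
        · simp
        · intro b _ hb; simp [hb]
        · intro h; exact absurd (Finset.mem_univ ζ) h
      rw [this, hδ]; ring
  refine ⟨c ζ₀ + f ζ₀, ⟨?_, ?_⟩, ⟨⟨ζ₀, rfl⟩, ?_⟩, ?_⟩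
  · obtain ⟨μ, hb, hc', hv⟩ := wit ζ₀
    exact ⟨ζ₀, μ, hb, hc', hv.symm⟩
  · rintro v ⟨ζ, μ, hb, hc', rfl⟩
    exact le_trans (hζ₀' ζ) (key ζ μ hb hc')
  · rintro v ⟨ζ, rfl⟩; exact hζ₀' ζ
  · intro ζ μ hb hc' heq ζ'
    have := key ζ μ hb hc'
    rw [heq] at this
    exact le_trans this (hζ₀' ζ')
end

section
/- Let Z be a nonempty finite type, c, V : Z → ℝ, and let K be a finite index set of cuts with functions h_k : Z → ℝ satisfying h_k(z) ≤ V(z) for all k ∈ K and z ∈ Z (all cuts are valid). Suppose (z*, χ*) ∈ Z × ℝ is a minimizer of c(z) + χ over the master feasible set { (z, χ) : h_k(z) ≤ χ for all k ∈ K }, and suppose V(z*) ≤ χ* (the subproblem value at the master solution does not exceed the master's cost variable). Then z* minimizes c(z) + V(z) over Z, and c(z*) + V(z*) = c(z*) + χ*. -/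
/-- Benders optimality certificate. If all cuts `h k` under-estimate
the recourse value `V`, the pair `(z*, χ*)` is feasible and minimizes `c z + χ`
over the master feasible set, and `V z* ≤ χ*`, then `z*` minimizes `c + V` and
`c z* + V z* = c z* + χ*`. -/
theorem benders_optimality_certificate {Z : Type*} [Fintype Z] [Nonempty Z]
    {K : Type*} [Fintype K]
    (c V : Z → ℝ) (h : K → Z → ℝ) (hvalid : ∀ k z, h k z ≤ V z)
    (zs : Z) (χs : ℝ) (hfeas : ∀ k, h k zs ≤ χs)
    (hopt : ∀ (z : Z) (χ : ℝ), (∀ k, h k z ≤ χ) → c zs + χs ≤ c z + χ)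
    (hsub : V zs ≤ χs) :
    (∀ z, c zs + V zs ≤ c z + V z) ∧ c zs + V zs = c zs + χs := by
  have hle : c zs + χs ≤ c zs + V zs := hopt zs (V zs) (fun k => hvalid k zs)
  have heq : c zs + V zs = c zs + χs := le_antisymm (by linarith) hle
  refine ⟨fun z => ?_, heq⟩
  calc c zs + V zs = c zs + χs := heq
    _ ≤ c z + V z := hopt z (V z) (fun k => hvalid k z)
end

section
/- Let B ≥ 2 and consider blocks b = 1, …, B with capacities Q̄_b > 0, block-fill indicators λ_b ∈ {0,1} for b = 1, …, B, and block discharges q_b ∈ ℝ satisfying: q_b ≥ 0 for all b; q_1 ≤ Q̄_1; q_b ≥ Q̄_b·λ_b for all b; and q_b ≤ Q̄_b·λ_{b−1} for all b = 2, …, B. Then for every block b with q_b > 0, all earlier blocks are filled to capacity: q_{b'} = Q̄_{b'} for every b' < b. -/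
/-- Sequential filling of the blocks of the piecewise-linear power
curve. Under the constraints `q 1 ≤ Q̄ 1`, `q b ≥ Q̄ b * λ b`, and
`q b ≤ Q̄ b * λ (b-1)` (for `2 ≤ b ≤ B`), with `q ≥ 0`, `Q̄ > 0`, and binary `λ`,
if `q b > 0` for some block `b` then every earlier block `b' < b` is filled to
capacity: `q b' = Q̄ b'`. -/
theorem blocks_fill_sequentially (B : ℕ) (hB : 2 ≤ B)
    (Qbar lam q : ℕ → ℝ)
    (hQpos : ∀ b, 1 ≤ b → b ≤ B → 0 < Qbar b)
    (hlam : ∀ b, 1 ≤ b → b ≤ B → lam b = 0 ∨ lam b = 1)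
    (hqnn : ∀ b, 1 ≤ b → b ≤ B → 0 ≤ q b)
    (hq1 : q 1 ≤ Qbar 1)
    (hqlow : ∀ b, 1 ≤ b → b ≤ B → q b ≥ Qbar b * lam b)
    (hqup : ∀ b, 2 ≤ b → b ≤ B → q b ≤ Qbar b * lam (b - 1)) :
    ∀ b, 1 ≤ b → b ≤ B → 0 < q b → ∀ b', 1 ≤ b' → b' < b → q b' = Qbar b' := by
  intro b
  induction b using Nat.strong_induction_on with
  | _ b ih =>
    intro hb1 hbB hqb b' hb'1 hb'b
    have hb2 : 2 ≤ b := by omega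
    have h1 := hqup b hb2 hbB
    have hl : lam (b - 1) = 1 := by
      rcases hlam (b - 1) (by omega) (by omega) with h | h
      · exfalso; rw [h, mul_zero] at h1; linarith
      · exact h
    have hlow := hqlow (b - 1) (by omega) (by omega)
    rw [hl, mul_one] at hlow
    have hup : q (b - 1) ≤ Qbar (b - 1) := by
      rcases Nat.lt_or_ge (b - 1) 2 with h | h
      · have hbe : b - 1 = 1 := by omega
        rw [hbe]; exact hq1
      · have h2 := hqup (b - 1) h (by omega)
        rcases hlam (b - 1 - 1) (by omega) (by omega) with hh | hh
        · rw [hh, mul_zero] at h2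
          linarith [hQpos (b - 1) (by omega) (by omega)]
        · rw [hh, mul_one] at h2; exact h2
    have heq : q (b - 1) = Qbar (b - 1) := le_antisymm hup hlow
    rcases Nat.lt_or_ge b' (b - 1) with h | h
    · exact ih (b - 1) (by omega) (by omega) (by omega)
        (by rw [heq]; exact hQpos (b - 1) (by omega) (by omega)) b' hb'1 h
    · have hbe : b' = b - 1 := by omega
      rw [hbe]; exact heq
end
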